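/- For every nonempty finite set S of integers, ∑_{f ∈ S} 2^{−w_S(f)} = 1, where w_S(f) = |{ν₂(f − g) : g ∈ S, g ≠ f}| is the number of distinct 2-adic valuations of differences of f with the other elements of S. -/

import Mathlib

/-!
If `|S| ≥ 2`, let `2^m` be the largest power of two dividing all differences in `S`. Then `S`
splits into the two nonempty residue classes modulo `2^(m+1)`. For `f` in one class, the
valuations `ν₂(f - g)` with `g` in the other class are all equal to `m`, while those inside
its own class exceed `m`; so `w_S(f) = w_C(f) + 1` where `C` is the class of `f`. Hence the sum over
`S` is half the sum over each class, and strong induction on `|S|` gives `1/2 + 1/2 = 1`.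
-/

def diffValuations (p : ℕ) (S : Finset ℤ) (f : ℤ) : Finset ℕ :=
  (S.erase f).image fun g => padicValInt p (f - g)

section

variable {p : ℕ} [Fact p.Prime]

lemma padicValInt_eq_of_dvd_of_not_dvd {a : ℤ} {m : ℕ} (h : (p : ℤ) ^ m ∣ a)
    (h' : ¬ (p : ℤ) ^ (m + 1) ∣ a) : padicValInt p a = m := by
  rw [padicValInt_dvd_iff] at h h'
  omega

lemma diffValuations_eq_insert {S : Finset ℤ} {f b : ℤ} {m : ℕ}
    (hS : ∀ x ∈ S, (p : ℤ) ^ m ∣ f - x) (hb : b ∈ S) (hbf : ¬ (p : ℤ) ^ (m + 1) ∣ f - b) :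
    diffValuations p S f =
      insert m (diffValuations p (S.filter fun x => (p : ℤ) ^ (m + 1) ∣ f - x) f) := by
  ext v
  simp only [diffValuations, Finset.mem_insert, Finset.mem_image, Finset.mem_erase,
    Finset.mem_filter]
  constructor
  · rintro ⟨g, ⟨hgf, hg⟩, rfl⟩
    by_cases hdvd : (p : ℤ) ^ (m + 1) ∣ f - g
    · exact Or.inr ⟨g, ⟨hgf, hg, hdvd⟩, rfl⟩
    · exact Or.inl (padicValInt_eq_of_dvd_of_not_dvd (hS g hg) hdvd)
  · rintro (rfl | ⟨g, ⟨hgf, hg, -⟩, rfl⟩)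
    · refine ⟨b, ⟨?_, hb⟩, padicValInt_eq_of_dvd_of_not_dvd (hS b hb) hbf⟩
      rintro rfl
      simp at hbf
    · exact ⟨g, ⟨hgf, hg⟩, rfl⟩

lemma card_diffValuations_eq_succ {S : Finset ℤ} {f b : ℤ} {m : ℕ}
    (hS : ∀ x ∈ S, (p : ℤ) ^ m ∣ f - x) (hb : b ∈ S) (hbf : ¬ (p : ℤ) ^ (m + 1) ∣ f - b) :
    (diffValuations p S f).card =
      (diffValuations p (S.filter fun x => (p : ℤ) ^ (m + 1) ∣ f - x) f).card + 1 := by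
  rw [diffValuations_eq_insert hS hb hbf, Finset.card_insert_of_notMem]
  simp only [diffValuations, Finset.mem_image, Finset.mem_erase, Finset.mem_filter, not_exists,
    not_and]
  rintro g ⟨hgf, -, hdvd⟩ rfl
  rw [padicValInt_dvd_iff] at hdvd
  have : f - g ≠ 0 := sub_ne_zero.mpr (Ne.symm hgf)
  omega

end

/-- Modulo `2^(m+1)`, a residue class modulo `2^m` splits into the class of `a` and the rest. -/
lemma two_pow_succ_dvd_sub_iff {a f x : ℤ} {m : ℕ} (hf : 2 ^ m ∣ a - f) (hx : 2 ^ m ∣ a - x) :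
    2 ^ (m + 1) ∣ f - x ↔ (2 ^ (m + 1) ∣ a - f ↔ 2 ^ (m + 1) ∣ a - x) := by
  obtain ⟨u, hu⟩ := hf
  obtain ⟨v, hv⟩ := hx
  have hfx : f - x = 2 ^ m * (v - u) := by linear_combination hv - hu
  have key : ∀ w : ℤ, (2 : ℤ) ^ (m + 1) ∣ 2 ^ m * w ↔ 2 ∣ w := fun w => by
    rw [pow_succ, mul_dvd_mul_iff_left (by positivity)]
  rw [hfx, hu, hv, key, key, key]
  omega

lemma exists_two_pow_dvd_sub_of_ne {S : Finset ℤ} {a b : ℤ} (hb : b ∈ S)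
    (hab : a ≠ b) :
    ∃ m : ℕ, ∃ c ∈ S, (∀ x ∈ S, 2 ^ m ∣ a - x) ∧ ¬ 2 ^ (m + 1) ∣ a - c := by
  obtain ⟨c, hc, hmin⟩ :=
    (S.erase a).exists_min_image (fun x => padicValInt 2 (a - x)) ⟨b, by simp [hb, Ne.symm hab]⟩
  obtain ⟨hca, hcS⟩ := Finset.mem_erase.mp hc
  have hac : a - c ≠ 0 := sub_ne_zero.mpr (Ne.symm hca)
  have hdvd_iff := padicValInt_dvd_iff (p := 2)
  simp only [Nat.cast_ofNat] at hdvd_iff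
  refine ⟨padicValInt 2 (a - c), c, hcS, fun x hx => ?_, ?_⟩
  · by_cases hxa : x = a
    · simp [hxa]
    · exact (hdvd_iff _ _).mpr (Or.inr (hmin x (Finset.mem_erase.mpr ⟨hxa, hx⟩)))
  · rw [hdvd_iff]
    omega

lemma sum_two_zpow_neg_card_diffValuations_eq_half {S : Finset ℤ} {a c : ℤ} {m : ℕ}
    (ha : a ∈ S) (hS : ∀ x ∈ S, 2 ^ m ∣ a - x) (hc : c ∈ S) (hac : ¬ 2 ^ (m + 1) ∣ a - c) :
    ∑ f ∈ S, (2 : ℝ) ^ (-((diffValuations 2 S f).card : ℤ)) =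
      ∑ f ∈ S, (2 : ℝ) ^ (-((diffValuations 2
        (S.filter fun x => (2 : ℤ) ^ (m + 1) ∣ f - x) f).card : ℤ)) / 2 := by
  refine Finset.sum_congr rfl fun f hf => ?_
  have hfS : ∀ x ∈ S, ((2 : ℕ) : ℤ) ^ m ∣ f - x := fun x hx => by
    simpa using dvd_sub (hS x hx) (hS f hf)
  obtain ⟨b, hb, hfb⟩ : ∃ b ∈ S, ¬ ((2 : ℕ) : ℤ) ^ (m + 1) ∣ f - b := by
    by_cases haf : 2 ^ (m + 1) ∣ a - f
    · exact ⟨c, hc, by simpa [two_pow_succ_dvd_sub_iff (hS f hf) (hS c hc), haf] using hac⟩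
    · exact ⟨a, by simpa [two_pow_succ_dvd_sub_iff (hS f hf) (hS a ha), haf]⟩
  rw [card_diffValuations_eq_succ hfS hb hfb, Nat.cast_ofNat]
  push_cast
  rw [neg_add, zpow_add₀ two_ne_zero, zpow_neg_one, div_eq_mul_inv]

theorem sum_two_zpow_neg_card_diffValuations (S : Finset ℤ) (hS : S.Nonempty) :
    ∑ f ∈ S, (2 : ℝ) ^ (-((diffValuations 2 S f).card : ℤ)) = 1 := by
  induction S using Finset.strongInduction with
  | H S ih =>
  obtain ⟨a, rfl⟩ | ⟨a, ha, b, hb, hab⟩ := hS.exists_eq_singleton_or_nontrivial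
  · simp [diffValuations]
  obtain ⟨m, c, hc, hS, hac⟩ := exists_two_pow_dvd_sub_of_ne hb hab
  set P : ℤ → Prop := fun x => 2 ^ (m + 1) ∣ a - x
  have hclass : ∀ f ∈ S, S.filter (fun x => (2 : ℤ) ^ (m + 1) ∣ f - x) =
      S.filter (fun x => P x ↔ P f) := fun f hf =>
    Finset.filter_congr fun x hx => (two_pow_succ_dvd_sub_iff (hS f hf) (hS x hx)).trans Iff.comm
  have hhalf : ∀ (Q : ℤ → Prop) [DecidablePred Q], (∀ f ∈ S, Q f → ∀ x, (P x ↔ P f) ↔ Q x) →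
      (∃ x ∈ S, Q x) → (∃ y ∈ S, ¬ Q y) →
      ∑ f ∈ S.filter Q, (2 : ℝ) ^ (-((diffValuations 2
        (S.filter fun x => (2 : ℤ) ^ (m + 1) ∣ f - x) f).card : ℤ)) = 1 := by
    rintro Q _ hQ ⟨x, hx, hQx⟩ hy
    rw [← ih _ (Finset.filter_ssubset.mpr hy) ⟨x, Finset.mem_filter.mpr ⟨hx, hQx⟩⟩]
    refine Finset.sum_congr rfl fun f hf => ?_
    obtain ⟨hfS, hQf⟩ := Finset.mem_filter.mp hf
    rw [hclass f hfS, Finset.filter_congr fun x _ => hQ f hfS hQf x]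
  have hPa : P a := by simp [P]
  rw [sum_two_zpow_neg_card_diffValuations_eq_half ha hS hc hac,
    ← Finset.sum_filter_add_sum_filter_not S P, ← Finset.sum_div, ← Finset.sum_div,
    hhalf P (fun f _ hPf x => by simp [hPf]) ⟨a, ha, hPa⟩ ⟨c, hc, hac⟩,
    hhalf (¬ P ·) (fun f _ hPf x => by simp [hPf]) ⟨c, hc, hac⟩ ⟨a, ha, not_not.mpr hPa⟩]
  norm_num

theorem stmt5 (S : Finset ℤ) (hS : S.Nonempty) :
    ∑ f ∈ S,
      (2 : ℝ) ^ (-((((S.erase f).image (fun g => padicValInt 2 (f - g))).card : ℤ))) = 1 :=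
  sum_two_zpow_neg_card_diffValuations S hS
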